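/- arXiv:2204.05301 — 3 statements merged into one kernel-verified Lean document; each statement's English description precedes it below -/
import Mathlib

section
/- Let g be a finite-dimensional Lie algebra over a field k of characteristic zero whose Killing form κ is nondegenerate, and for a,b,c,d ∈ g set T(a,b,c,d) = Tr(ad a ∘ ad b ∘ ad c ∘ ad d). Then for all a,b,c,d ∈ g: 3·(T(a,b,c,d) + T(b,a,c,d)) − 2·(T(a,b,c,d) + T(a,c,d,b) + T(a,d,b,c)) = −κ([a,d],[b,c]) − (1/2)·κ([a,b],[c,d]). -/
open LieAlgebra in
/-- The quartic adjoint trace `T(a,b,c,d) = Tr(ad a ∘ ad b ∘ ad c ∘ ad d)`. -/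
noncomputable def adTrace4 (k : Type*) {L : Type*} [Field k]
    [LieRing L] [LieAlgebra k L] (a b c d : L) : k :=
  LinearMap.trace k L (ad k L a ∘ₗ ad k L b ∘ₗ ad k L c ∘ₗ ad k L d)

section aux

open LieAlgebra LinearMap

variable {k L : Type*} [Field k] [LieRing L] [LieAlgebra k L] [Module.Finite k L]

/-- Cyclicity of the trace. -/
lemma adTrace4_cyclic (a b c d : L) : adTrace4 k a b c d = adTrace4 k b c d a := by
  unfold adTrace4
  rw [show ad k L a ∘ₗ ad k L b ∘ₗ ad k L c ∘ₗ ad k L d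
      = ad k L a ∘ₗ (ad k L b ∘ₗ ad k L c ∘ₗ ad k L d) from rfl,
    LinearMap.trace_comp_comm']
  rfl

/-- Conjugating `ad x` by the Killing-form duality isomorphism gives `-(ad x).dualMap`. -/
lemma conj_ad (hκ : (killingForm k L).Nondegenerate) (x : L) :
    ((killingForm k L).toDual hκ).conj (ad k L x) = -(ad k L x).dualMap := by
  ext y z
  simp only [LinearEquiv.conj_apply, LinearMap.coe_comp, Function.comp_apply,
    LinearEquiv.coe_coe, LinearMap.neg_apply, LinearMap.dualMap_apply]
  rw [show ((killingForm k L).toDual hκ) (ad k L x (((killingForm k L).toDual hκ).symm y)) z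
      = killingForm k L (ad k L x (((killingForm k L).toDual hκ).symm y)) z from rfl]
  rw [ad_apply, LieModule.traceForm_apply_lie_apply']
  rw [show (killingForm k L) (((killingForm k L).toDual hκ).symm y) ⁅x, z⁆
      = y ⁅x, z⁆ from LinearMap.BilinForm.apply_toDual_symm_apply (hB := hκ) y ⁅x, z⁆]
  simp

/-- Reversal symmetry of the quartic trace when the Killing form is nondegenerate. -/
lemma adTrace4_reverse (hκ : (killingForm k L).Nondegenerate) (a b c d : L) :
    adTrace4 k a b c d = adTrace4 k d c b a := by
  set φ := (killingForm k L).toDual hκ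
  have key : φ.conj (ad k L a ∘ₗ ad k L b ∘ₗ ad k L c ∘ₗ ad k L d)
      = (ad k L d ∘ₗ ad k L c ∘ₗ ad k L b ∘ₗ ad k L a).dualMap := by
    rw [LinearEquiv.conj_comp, LinearEquiv.conj_comp, LinearEquiv.conj_comp,
      conj_ad hκ, conj_ad hκ, conj_ad hκ, conj_ad hκ]
    ext f y
    simp [LinearMap.dualMap_apply]
  have := LinearMap.trace_conj' (ad k L a ∘ₗ ad k L b ∘ₗ ad k L c ∘ₗ ad k L d) φ
  rw [key] at this
  unfold adTrace4
  rw [← this, LinearMap.dualMap_def, LinearMap.trace_transpose']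

set_option linter.unusedSectionVars false in
/-- Expansion of the Killing form of brackets into quartic traces. -/
lemma killing_expand (x y z w : L) :
    killingForm k L ⁅x, y⁆ ⁅z, w⁆ =
      adTrace4 k x y z w - adTrace4 k x y w z - adTrace4 k y x z w + adTrace4 k y x w z := by
  simp only [killingForm_apply_apply, LieHom.map_lie, Ring.lie_def, adTrace4]
  simp only [← Module.End.mul_eq_comp]
  rw [show ((ad k L) x * (ad k L) y - (ad k L) y * (ad k L) x) *
      ((ad k L) z * (ad k L) w - (ad k L) w * (ad k L) z)
    = (ad k L x * (ad k L y * (ad k L z * ad k L w)))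
      - (ad k L x * (ad k L y * (ad k L w * ad k L z)))
      - (ad k L y * (ad k L x * (ad k L z * ad k L w)))
      + (ad k L y * (ad k L x * (ad k L w * ad k L z))) by noncomm_ring]
  simp [map_sub, map_add]

end aux

/-- For a finite-dimensional Lie algebra over a field of characteristic zero with
nondegenerate Killing form `κ`,
`3·(T(a,b,c,d) + T(b,a,c,d)) − 2·(T(a,b,c,d) + T(a,c,d,b) + T(a,d,b,c))
  = −κ([a,d],[b,c]) − (1/2)·κ([a,b],[c,d])`. -/
theorem adTrace4_rearrangement {k L : Type*} [Field k] [CharZero k]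
    [LieRing L] [LieAlgebra k L] [Module.Finite k L]
    (hκ : (killingForm k L).Nondegenerate)
    (a b c d : L) :
    3 * (adTrace4 k a b c d + adTrace4 k b a c d) -
        2 * (adTrace4 k a b c d + adTrace4 k a c d b + adTrace4 k a d b c) =
      -killingForm k L ⁅a, d⁆ ⁅b, c⁆ -
        (1 / 2 : k) * killingForm k L ⁅a, b⁆ ⁅c, d⁆ := by
  have cyc : ∀ w x y z : L, adTrace4 k w x y z = adTrace4 k x y z w := adTrace4_cyclic
  have rev : ∀ w x y z : L, adTrace4 k w x y z = adTrace4 k z y x w :=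
    fun w x y z => adTrace4_reverse hκ w x y z
  have hQ : adTrace4 k b a c d = adTrace4 k a c d b := cyc b a c d
  have h1 : adTrace4 k a d c b = adTrace4 k a b c d := by
    rw [rev a d c b, cyc b c d a, cyc c d a b, cyc d a b c]
  have h2 : adTrace4 k d a b c = adTrace4 k a b c d := cyc d a b c
  have h3 : adTrace4 k d a c b = adTrace4 k a d b c := by
    rw [rev d a c b, cyc b c a d, cyc c a d b]
  have h4 : adTrace4 k a b d c = adTrace4 k a c d b := by
    rw [rev a b d c, cyc c d b a, cyc d b a c, cyc b a c d]
  have h5 : adTrace4 k b a d c = adTrace4 k a b c d := by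
    rw [rev b a d c, cyc c d a b, cyc d a b c]
  rw [killing_expand a d b c, killing_expand a b c d, hQ, h1, h2, h3, h4, h5]
  ring
end

section
/- For every integer n ≥ 4 there is no constant λ ∈ ℂ such that for all trace-zero n×n complex matrices X, the trace of (ad X)⁴ as an endomorphism of sl(n,ℂ) equals λ·(tr(X²))². -/
/-!
In the standard basis of matrix units, `ad (diagonal d)` acts diagonally with eigenvalues
`d i - d j`, and it maps everything into `sl`, so its trace on `sl` is that on all matrices.
Expanding the quartic power sum, for `∑ d i = 0` this gives
`Tr (ad X)⁴ = 2n ∑ d i⁴ + 6 (∑ d i²)²` with `tr X² = ∑ d i²`. The quotient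
`∑ d i⁴ / (∑ d i²)²` is `1/2` for `d = (1, -1, 0, …)` and `1/4` for `d = (1, 1, -1, -1, 0, …)`,
so an identity `Tr (ad X)⁴ = λ (tr X²)²` would force `λ = n + 6 = n/2 + 6`.
-/

open LieAlgebra LieAlgebra.SpecialLinear Matrix Finset

attribute [local instance 100] LieRing.ofAssociativeRing

theorem LinearMap.toMatrix_eq_diagonal_of_apply_basis {R M ι : Type*} [CommRing R]
    [AddCommGroup M] [Module R M] [Fintype ι] [DecidableEq ι] {f : Module.End R M}
    (b : Module.Basis ι R M) (μ : ι → R) (h : ∀ i, f (b i) = μ i • b i) :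
    toMatrix b b f = diagonal μ := by
  ext i j
  rw [toMatrix_apply, h, map_smul, b.repr_self, Finsupp.smul_apply, Finsupp.single_apply,
    diagonal_apply]
  split_ifs <;> simp_all [eq_comm]

theorem LinearMap.trace_pow_eq_sum_of_apply_basis {R M ι : Type*} [CommRing R]
    [AddCommGroup M] [Module R M] [Fintype ι] [DecidableEq ι] {f : Module.End R M}
    (b : Module.Basis ι R M) (μ : ι → R) (h : ∀ i, f (b i) = μ i • b i) (k : ℕ) :
    trace R M (f ^ k) = ∑ i, μ i ^ k := by
  rw [trace_eq_matrix_trace R b, ← toMatrix_pow, toMatrix_eq_diagonal_of_apply_basis b μ h,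
    diagonal_pow, trace_diagonal]
  rfl

theorem Finset.sum_sum_sub_pow_four {ι R : Type*} [Fintype ι] [CommRing R] (d : ι → R) :
    ∑ i, ∑ j, (d i - d j) ^ 4 = 2 * Fintype.card ι * ∑ i, d i ^ 4 + 6 * (∑ i, d i ^ 2) ^ 2
      - 8 * (∑ i, d i) * ∑ i, d i ^ 3 := by
  have expand : ∀ i j, (d i - d j) ^ 4 = d i ^ 4 - 4 * d i ^ 3 * d j + 6 * d i ^ 2 * d j ^ 2
      - 4 * d i * d j ^ 3 + d j ^ 4 := fun i j ↦ by ring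
  simp only [expand, sum_add_distrib, sum_sub_distrib, ← mul_sum, ← sum_mul, sum_const,
    card_univ, nsmul_eq_mul]
  ring

namespace Matrix

variable {ι R : Type*} [Fintype ι] [DecidableEq ι]

theorem ad_diagonal_single [CommRing R] (d : ι → R) (i j : ι) (c : R) :
    ad R (Matrix ι ι R) (diagonal d) (single i j c) = (d i - d j) • single i j c := by
  ext a b
  by_cases h : i = a ∧ j = b
  · obtain ⟨rfl, rfl⟩ := h
    simp [Ring.lie_def, mul_comm, mul_sub]
  · simp [Ring.lie_def, single, h]

theorem trace_ad_diagonal_pow [CommRing R] (d : ι → R) (k : ℕ) :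
    LinearMap.trace R (Matrix ι ι R) (ad R (Matrix ι ι R) (diagonal d) ^ k) =
      ∑ i, ∑ j, (d i - d j) ^ k := by
  rw [LinearMap.trace_pow_eq_sum_of_apply_basis (stdBasis R ι ι) (fun p ↦ d p.1 - d p.2)
    (fun p ↦ by rw [stdBasis_eq_single]; exact ad_diagonal_single d p.1 p.2 1),
    Fintype.sum_prod_type]

theorem trace_ad_sl_pow [Field R] (X : sl ι R) {k : ℕ} (hk : k ≠ 0) :
    LinearMap.trace R (sl ι R) (ad R (sl ι R) X ^ k) =
      LinearMap.trace R (Matrix ι ι R) (ad R (Matrix ι ι R) X ^ k) := by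
  obtain ⟨k, rfl⟩ := Nat.exists_eq_add_one_of_ne_zero hk
  have hmem : ∀ A, (ad R (Matrix ι ι R) X ^ (k + 1)) A ∈ (sl ι R).toSubmodule := fun A ↦ by
    rw [pow_succ', Module.End.mul_apply]
    exact LinearMap.mem_ker.2 (matrix_trace_commutator_zero ..)
  have hinv : ∀ A ∈ (sl ι R).toSubmodule, ad R (Matrix ι ι R) X A ∈ (sl ι R).toSubmodule :=
    fun A _ ↦ LinearMap.mem_ker.2 (matrix_trace_commutator_zero ..)
  have hrestrict : ad R (sl ι R) X = (ad R (Matrix ι ι R) X).restrict hinv := rfl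
  rw [hrestrict, Module.End.pow_restrict]
  exact LinearMap.trace_restrict_eq_of_forall_mem _ _ hmem

theorem trace_ad_sl_diagonal_pow_four [Field R] (d : ι → R) (hd : (diagonal d).trace = 0) :
    LinearMap.trace R (sl ι R) (ad R (sl ι R) ⟨diagonal d, hd⟩ ^ 4) =
      2 * Fintype.card ι * ∑ i, d i ^ 4 + 6 * (∑ i, d i ^ 2) ^ 2 := by
  rw [trace_diagonal] at hd
  rw [trace_ad_sl_pow _ four_ne_zero, trace_ad_diagonal_pow, sum_sum_sub_pow_four, hd]
  ring

end Matrix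

open LieAlgebra LieAlgebra.SpecialLinear in
/-- For every `n ≥ 4` there is no constant `λ ∈ ℂ` such that for all trace-zero `n×n`
complex matrices `X`, the trace of `(ad X)⁴` as an endomorphism of `sl(n,ℂ)` equals
`λ·(tr(X²))²`. -/
theorem sl_no_quartic_trace_identity (n : ℕ) (hn : 4 ≤ n) :
    ¬ ∃ lam : ℂ, ∀ (X : Matrix (Fin n) (Fin n) ℂ) (hX : X.trace = 0),
      LinearMap.trace ℂ (sl (Fin n) ℂ)
          ((ad ℂ (sl (Fin n) ℂ) ⟨X, hX⟩) ^ 4) =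
        lam * (X ^ 2).trace ^ 2 := by
  rintro ⟨lam, h⟩
  obtain ⟨m, rfl⟩ := Nat.exists_eq_add_of_le hn
  have hdiag (v : Fin 4 → ℂ) (hv : ∑ i, v i = 0) :
      2 * (4 + m : ℂ) * ∑ i, v i ^ 4 + 6 * (∑ i, v i ^ 2) ^ 2 = lam * (∑ i, v i ^ 2) ^ 2 := by
    have hd : (diagonal (Fin.append v (0 : Fin m → ℂ))).trace = 0 := by
      simp [trace_diagonal, Fin.sum_univ_add, hv]
    have hX := h _ hd
    rw [trace_ad_sl_diagonal_pow_four, diagonal_pow, trace_diagonal] at hX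
    simpa [Fin.sum_univ_add] using hX
  have h1 := hdiag ![1, -1, 0, 0] (by simp [Fin.sum_univ_four])
  have h2 := hdiag ![1, 1, -1, -1] (by simp [Fin.sum_univ_four])
  simp only [Fin.sum_univ_four, Matrix.cons_val] at h1 h2
  norm_num only at h1 h2
  have hcard : (4 + m : ℂ) = 0 := by linear_combination (4 * h1 - h2) / 8
  norm_cast at hcard
  omega
end

section
/- For every antisymmetric 8×8 complex matrix X (Xᵀ = −X), the trace of (ad X)⁴, where ad X is the endomorphism Y ↦ XY − YX of the space of antisymmetric 8×8 complex matrices, equals 3·(tr(X²))². -/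
/-!
On all of `Matrix n n K` the map `ad X = L_X - R_X` is a difference of commuting operators, so
`(ad X)^m` expands binomially into operators `Y ↦ A Y B`, whose trace is `tr A * tr B`, and whose
trace after transposition is `tr (Aᵀ B)`. Since `(1 - ᵀ)/2` is a projection onto `so(n)` that
`ad X` respects, the trace of `(ad X)^m` on `so(n)` is half the difference of these two traces.
For `m = 4` and `X` skew (so odd powers of `X` are traceless) this gives
`(n - 8) tr X⁴ + 3 (tr X²)²`, and the first term disappears exactly for `n = 8`.
-/

open LinearMap (mulLeft mulRight mulLeft_apply mulRight_apply)
open LieAlgebra LieAlgebra.Orthogonal Finset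

attribute [local instance 100] LieRing.ofAssociativeRing

lemma LieAlgebra.ad_pow_eq_sum_mulLeft_comp_mulRight {R A : Type*} [CommRing R] [Ring A]
    [Algebra R A] (a : A) (m : ℕ) :
    ad R A a ^ m = ∑ k ∈ range (m + 1),
      ((-1) ^ (m - k) * m.choose k : R) • (mulLeft R (a ^ k) ∘ₗ mulRight R (a ^ (m - k))) := by
  rw [ad_eq_lmul_left_sub_lmul_right, Pi.sub_apply, sub_eq_add_neg,
    (LinearMap.commute_mulLeft_right (R := R) a a).neg_right.add_pow]
  refine sum_congr rfl fun k _ => ?_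
  rw [LinearMap.pow_mulLeft, neg_pow, LinearMap.pow_mulRight, ← Module.End.mul_eq_comp,
    Algebra.smul_def]
  simp only [map_mul, map_pow, map_neg, map_one, map_natCast]
  rw [mul_assoc ((-1) ^ _), Nat.cast_comm, ← mul_assoc (mulLeft _ _),
    ((Commute.neg_one_right _).pow_right _).eq]
  simp only [mul_assoc]

namespace LieSubalgebra

variable {R L : Type*} [CommRing R] [LieRing L] [LieAlgebra R L]

lemma ad_pow_apply_mem (H : LieSubalgebra R L) (x : H) (m : ℕ) {y : L}
    (hy : y ∈ H.toSubmodule) : (ad R L x ^ m) y ∈ H.toSubmodule :=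
  coe_ad_pow R L H x ⟨y, hy⟩ m ▸ ((ad R H x ^ m) ⟨y, hy⟩).2

lemma ad_pow_eq_restrict (H : LieSubalgebra R L) (x : H) (m : ℕ) :
    ad R H x ^ m = (ad R L x ^ m).restrict fun _ hy => H.ad_pow_apply_mem x m hy :=
  LinearMap.ext fun y => Subtype.ext (coe_ad_pow R L H x y m)

end LieSubalgebra

namespace Matrix

lemma stdBasis_repr_apply {m n R : Type*} [Fintype m] [Finite n] [Semiring R]
    (M : Matrix m n R) (p : m × n) : (stdBasis R m n).repr M p = M p.1 p.2 := by
  simp [stdBasis]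

lemma mul_single_one_mul_apply {l m n o α : Type*} [Fintype m] [Fintype n] [DecidableEq m]
    [DecidableEq n] [Semiring α] (A : Matrix l m α) (B : Matrix n o α) (i : m) (j : n) (k : l)
    (r : o) : (A * single i j (1 : α) * B) k r = A k i * B j r := by
  simp [mul_apply, single_apply, ite_and]

section CommRing

variable {n R : Type*} [Fintype n] [DecidableEq n] [CommRing R]

lemma trace_end_eq_sum_single (g : Module.End R (Matrix n n R)) :
    LinearMap.trace R _ g = ∑ p : n × n, g (single p.1 p.2 1) p.1 p.2 := by
  rw [LinearMap.trace_eq_matrix_trace R (stdBasis R n n), Matrix.trace]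
  refine Fintype.sum_congr _ _ fun p => ?_
  rw [diag_apply, LinearMap.toMatrix_apply, stdBasis_repr_apply, stdBasis_eq_single]

lemma trace_mulLeft_comp_mulRight (A B : Matrix n n R) :
    LinearMap.trace R _ (mulLeft R A ∘ₗ mulRight R B) = A.trace * B.trace := by
  simp only [trace_end_eq_sum_single, LinearMap.comp_apply, mulLeft_apply, mulRight_apply,
    ← mul_assoc, mul_single_one_mul_apply, Fintype.sum_prod_type, Matrix.trace, diag_apply,
    sum_mul_sum]

lemma trace_transpose_comp_mulLeft_comp_mulRight (A B : Matrix n n R) :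
    LinearMap.trace R _
        ((transposeLinearEquiv n n R R).toLinearMap ∘ₗ mulLeft R A ∘ₗ mulRight R B) =
      (Aᵀ * B).trace := by
  simp only [trace_end_eq_sum_single, LinearMap.comp_apply, mulLeft_apply, mulRight_apply,
    ← mul_assoc, LinearEquiv.coe_coe, transposeLinearEquiv_apply, AddEquiv.toEquiv_eq_coe,
    Equiv.toFun_as_coe, AddEquiv.coe_toEquiv, transposeAddEquiv_apply, transpose_apply,
    mul_single_one_mul_apply, Fintype.sum_prod_type]
  simp only [Matrix.trace, diag_apply, mul_apply, transpose_apply]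

lemma transpose_pow_of_transpose_eq_neg {X : Matrix n n R} (hX : Xᵀ = -X) (k : ℕ) :
    (X ^ k)ᵀ = (-1 : R) ^ k • X ^ k := by
  rw [transpose_pow, hX, ← neg_one_smul R X, smul_pow]

lemma trace_ad_pow (A : Matrix n n R) (m : ℕ) :
    LinearMap.trace R _ (ad R _ A ^ m) = ∑ k ∈ range (m + 1),
      (-1) ^ (m - k) * m.choose k * ((A ^ k).trace * (A ^ (m - k)).trace) := by
  simp only [ad_pow_eq_sum_mulLeft_comp_mulRight, map_sum, map_smul, trace_mulLeft_comp_mulRight,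
    smul_eq_mul]

lemma trace_transpose_comp_ad_pow {X : Matrix n n R} (hX : Xᵀ = -X) (m : ℕ) :
    LinearMap.trace R _ ((transposeLinearEquiv n n R R).toLinearMap ∘ₗ ad R _ X ^ m) =
      (-2) ^ m * (X ^ m).trace := by
  have hterm : ∀ k ∈ range (m + 1), (-1) ^ (m - k) * (m.choose k : R) *
      ((X ^ k)ᵀ * X ^ (m - k)).trace = (-1) ^ m * (X ^ m).trace * m.choose k := by
    intro k hk
    have hkm : k + (m - k) = m := Nat.add_sub_cancel' (mem_range_succ_iff.mp hk)
    have hsign : (-1 : R) ^ (m - k) * (-1) ^ k = (-1) ^ m := by rw [← pow_add, add_comm, hkm]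
    rw [transpose_pow_of_transpose_eq_neg hX, smul_mul_assoc, ← pow_add, hkm, trace_smul,
      smul_eq_mul]
    linear_combination ((m.choose k : R) * (X ^ m).trace) * hsign
  rw [ad_pow_eq_sum_mulLeft_comp_mulRight, ← Module.End.mul_eq_comp, mul_sum, map_sum]
  simp only [mul_smul_comm, Module.End.mul_eq_comp, map_smul,
    trace_transpose_comp_mulLeft_comp_mulRight, smul_eq_mul]
  rw [sum_congr rfl hterm, ← mul_sum, ← Nat.cast_sum, Nat.sum_range_choose, neg_pow (2 : R)]
  push_cast
  ring

end CommRing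

section Field

variable {n K : Type*} [Field K]

def skewPart : Module.End K (Matrix n n K) :=
  (2⁻¹ : K) • (LinearMap.id - (transposeLinearEquiv n n K K).toLinearMap)

lemma skewPart_apply (M : Matrix n n K) : skewPart M = (2⁻¹ : K) • (M - Mᵀ) := rfl

variable [Fintype n] [DecidableEq n]

lemma skewPart_mem_so (M : Matrix n n K) : skewPart M ∈ so n K := by
  rw [mem_so, skewPart_apply, transpose_smul, transpose_sub, transpose_transpose, ← smul_neg,
    neg_sub]

variable [NeZero (2 : K)]

lemma skewPart_eq_self {M : Matrix n n K} (hM : M ∈ so n K) : skewPart M = M := by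
  rw [skewPart_apply, (mem_so n K M).mp hM, sub_neg_eq_add, ← two_smul K, smul_smul,
    inv_mul_cancel₀ two_ne_zero, one_smul]

lemma trace_restrict_so (g : Module.End K (Matrix n n K))
    (hg : ∀ M ∈ (so n K).toSubmodule, g M ∈ (so n K).toSubmodule) :
    LinearMap.trace K (so n K) (g.restrict hg) = 2⁻¹ * (LinearMap.trace K _ g -
      LinearMap.trace K _ ((transposeLinearEquiv n n K K).toLinearMap ∘ₗ g)) := by
  have hskew : g.restrict hg = (skewPart ∘ₗ g).restrict fun M _ => skewPart_mem_so (g M) :=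
    LinearMap.ext fun M => Subtype.ext (skewPart_eq_self (hg M M.2)).symm
  rw [hskew]
  refine (LinearMap.trace_restrict_eq_of_forall_mem (so n K).toSubmodule _
    fun M => skewPart_mem_so (g M)).trans ?_
  rw [skewPart, LinearMap.smul_comp, map_smul, LinearMap.sub_comp, map_sub, LinearMap.id_comp,
    smul_eq_mul]

lemma trace_pow_eq_zero_of_odd {X : Matrix n n K} (hX : Xᵀ = -X) {k : ℕ} (hk : Odd k) :
    (X ^ k).trace = 0 := by
  have h := congrArg trace (transpose_pow_of_transpose_eq_neg hX k)
  rw [trace_transpose, trace_smul, hk.neg_one_pow, neg_one_smul, eq_neg_iff_add_eq_zero,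
    ← two_mul] at h
  exact (mul_eq_zero.mp h).resolve_left two_ne_zero

theorem trace_ad_so_pow {X : Matrix n n K} (hX : X ∈ so n K) (m : ℕ) :
    LinearMap.trace K (so n K) (ad K (so n K) ⟨X, hX⟩ ^ m) =
      2⁻¹ * (∑ k ∈ range (m + 1),
        (-1) ^ (m - k) * m.choose k * ((X ^ k).trace * (X ^ (m - k)).trace) -
        (-2) ^ m * (X ^ m).trace) := by
  rw [LieSubalgebra.ad_pow_eq_restrict, trace_restrict_so, trace_ad_pow,
    trace_transpose_comp_ad_pow ((mem_so n K X).mp hX)]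

theorem trace_ad_so_pow_four {X : Matrix n n K} (hX : X ∈ so n K) :
    LinearMap.trace K (so n K) (ad K (so n K) ⟨X, hX⟩ ^ 4) =
      (Fintype.card n - 8 : K) * (X ^ 4).trace + 3 * (X ^ 2).trace ^ 2 := by
  have hskew := (mem_so n K X).mp hX
  have h1 : X.trace = 0 := by simpa using trace_pow_eq_zero_of_odd hskew odd_one
  have h3 : (X ^ 3).trace = 0 := trace_pow_eq_zero_of_odd hskew (by decide)
  rw [trace_ad_so_pow]
  simp only [Nat.reduceAdd, sum_range_succ, range_one, sum_singleton, tsub_zero, Nat.choose,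
    Nat.cast_one, mul_one, pow_zero, trace_one, Nat.add_one_sub_one, add_zero, Nat.cast_ofNat,
    pow_one, h1, h3, mul_zero, Nat.reduceSub, even_two, Even.neg_pow, one_pow, one_mul, neg_mul,
    tsub_self]
  field_simp
  ring

end Field

end Matrix

open Matrix LieAlgebra LieAlgebra.Orthogonal in
/-- For every antisymmetric 8×8 complex matrix `X` (`Xᵀ = −X`), the trace of `(ad X)⁴`
as an endomorphism of `so(8,ℂ)` equals `3·(tr(X²))²`. -/
theorem so8_adjoint_quartic_trace
    (X : Matrix (Fin 8) (Fin 8) ℂ) (hX : Xᵀ = -X) :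
    LinearMap.trace ℂ (so (Fin 8) ℂ)
        ((ad ℂ (so (Fin 8) ℂ) ⟨X, (mem_so (Fin 8) ℂ X).mpr hX⟩) ^ 4) =
      3 * (X ^ 2).trace ^ 2 := by
  rw [trace_ad_so_pow_four, Fintype.card_fin]
  norm_num
end
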